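/- The quantitative Krivine machine respects the algebraic equivalence: over a commutative semiring S in which every positive integer has a multiplicative inverse, if M and N are closed algebraic terms with M ≡_alg N, then K̂(M)_t = K̂(N)_t for every simple resource term t. -/

import Mathlib

set_option maxHeartbeats 1000000

noncomputable section
open scoped Classical

/-- Simple terms of the resource λ-calculus.  The argument of an application is a
finite multiset of simple terms (a simple poly-term), represented as a `List`
(read up to permutation).  The syntax is enriched with the constant `c0`. -/
inductive RTerm : Type
  | var : ℕ → RTerm
  | lam : ℕ → RTerm → RTerm
  | app : RTerm → List RTerm → RTerm
  | c0  : RTerm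

/-- `deg x s` is the number of (free) occurrences of the variable `x` in `s`. -/
def RTerm.deg (x : ℕ) : RTerm → ℕ
  | .var y => if y = x then 1 else 0
  | .lam y t => if y = x then 0 else t.deg x
  | .app t T => t.deg x + (T.attach.map (fun u => u.1.deg x)).sum
  | .c0 => 0
decreasing_by all_goals (try simp_wf) <;> first
  | (have := List.sizeOf_lt_of_mem u.2; omega)
  | omega

/-- Simultaneous substitution of (optional) terms for variables. -/
def RTerm.msubst (σ : ℕ → Option RTerm) : RTerm → RTerm
  | .var y => (σ y).getD (.var y)
  | .lam y t => .lam y (t.msubst (fun z => if z = y then none else σ z))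
  | .app t T => .app (t.msubst σ) (T.attach.map (fun u => u.1.msubst σ))
  | .c0 => .c0
decreasing_by all_goals (try simp_wf) <;> first
  | (have := List.sizeOf_lt_of_mem u.2; omega)
  | omega

/-- `subst x u t` is `t[u/x]`. -/
def RTerm.subst (x : ℕ) (u : RTerm) (t : RTerm) : RTerm :=
  t.msubst (fun y => if y = x then some u else none)

/-- Size of a simple term. -/
def RTerm.size : RTerm → ℕ
  | .var _ => 1
  | .lam _ t => t.size + 1
  | .app t T => t.size + (T.attach.map (fun u => u.1.size)).sum + 1
  | .c0 => 1
decreasing_by all_goals (try simp_wf) <;> first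
  | (have := List.sizeOf_lt_of_mem u.2; omega)
  | omega

end
noncomputable section
open scoped Classical

-- One-step linear derivative: `rderiv x u s` is the formal sum (with
-- ℕ-coefficients) of all the ways of replacing exactly one occurrence of `x`
-- in `s` by `u`.
mutual
def rderiv (x : ℕ) (u : RTerm) : RTerm → (RTerm →₀ ℕ)
  | .var y => if y = x then Finsupp.single u 1 else 0
  | .lam y t => if y = x then 0 else (rderiv x u t).mapDomain (RTerm.lam y)
  | .app t T => (rderiv x u t).mapDomain (fun s => RTerm.app s T)
      + (rderivList x u T).mapDomain (RTerm.app t)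
  | .c0 => 0

def rderivList (x : ℕ) (u : RTerm) : List RTerm → (List RTerm →₀ ℕ)
  | [] => 0
  | t :: T => (rderiv x u t).mapDomain (· :: T) + (rderivList x u T).mapDomain (t :: ·)
end

/-- Linear extension of `rderiv` to formal sums. -/
def rderivC (x : ℕ) (u : RTerm) (𝒮 : RTerm →₀ ℕ) : RTerm →₀ ℕ :=
  𝒮.sum (fun t n => n • rderiv x u t)

/-- The linear substitution `∂_x(s, t₁⋯tₙ)`: iterated linear derivative of `s`
at `x` along the elements of `T`, keeping only the terms in which all
occurrences of `x` have been consumed (it is `0` unless `deg x s = T.length`,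
assuming the usual convention that `x` is not free in the elements of `T`). -/
def rsub (x : ℕ) (T : List RTerm) (s : RTerm) : RTerm →₀ ℕ :=
  (T.foldl (fun 𝒮 u => rderivC x u 𝒮) (Finsupp.single s 1)).filter
    (fun t => t.deg x = 0)

/-- Linear extension of `∂_x` to formal sums in the first argument. -/
def rsubC (x : ℕ) (𝒮 : RTerm →₀ ℕ) (T : List RTerm) : RTerm →₀ ℕ :=
  𝒮.sum fun s n => n • rsub x T s

end
noncomputable section
open scoped Classical

/-- One-step β-reduction from a simple term to a formal sum:
the redex rule `⟨λx.s⟩T →β ∂_x(s,T)` closed under the contextual rules. -/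
inductive Step : RTerm → (RTerm →₀ ℕ) → Prop
  | redex (x : ℕ) (s : RTerm) (T : List RTerm) :
      Step (.app (.lam x s) T) (rsub x T s)
  | appL {s : RTerm} {𝒮 : RTerm →₀ ℕ} (T : List RTerm) :
      Step s 𝒮 → Step (.app s T) (𝒮.mapDomain (fun v => .app v T))
  | appR {s : RTerm} {𝒮 : RTerm →₀ ℕ} (u : RTerm) (T₁ T₂ : List RTerm) :
      Step s 𝒮 →
        Step (.app u (T₁ ++ s :: T₂)) (𝒮.mapDomain (fun v => .app u (T₁ ++ v :: T₂)))
  | lam {s : RTerm} {𝒮 : RTerm →₀ ℕ} (x : ℕ) :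
      Step s 𝒮 → Step (.lam x s) (𝒮.mapDomain (.lam x))

/-- β-reduction on formal ℕ-linear combinations of simple terms:
`s + u →β 𝒮 + u` whenever `s →β 𝒮`. -/
inductive RStep : (RTerm →₀ ℕ) → (RTerm →₀ ℕ) → Prop
  | mk {s : RTerm} {𝒮 U : RTerm →₀ ℕ} :
      Step s 𝒮 → RStep (Finsupp.single s 1 + U) (𝒮 + U)

/-- An element of `ℕ⟨Δ⟩` is β-normal when no `→β` step applies to it. -/
def RNormal (a : RTerm →₀ ℕ) : Prop := ∀ b, ¬ RStep a b

end
noncomputable section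
open scoped Classical

/-- The normalization map `NF : ℕ⟨Δ⟩ → ℕ⟨Δ₀⟩`, well defined thanks to
confluence and strong normalization of `→β` over `ℕ`: `NF a` is the unique
β-normal reduct of `a`. -/
def NF (a : RTerm →₀ ℕ) : RTerm →₀ ℕ :=
  if h : ∃ b, Relation.ReflTransGen RStep a b ∧ RNormal b then h.choose else 0

/-- `NF(t)_{c₀}`: the coefficient of the constant `c₀` in the normal form of
the simple term `t`. -/
def NFc0 (t : RTerm) : ℕ := NF (Finsupp.single t 1) RTerm.c0

end
noncomputable section
open scoped Classical

/-- The multiplicity `m(t)` of a simple resource term: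
`m(x) = 1`, `m(λx.t) = m(t)`,
`m(⟨t⟩T) = m(t) · ∏_{u ∈ supp T} T(u)! · m(u)^{T(u)}`. -/
def mult : RTerm → ℕ
  | .var _ => 1
  | .lam _ t => mult t
  | .app t T =>
      mult t * (T.attach.map fun u => mult u.1).prod *
        ∏ u ∈ (↑T : Multiset RTerm).toFinset, ((↑T : Multiset RTerm).count u).factorial
  | .c0 => 1
decreasing_by all_goals (try simp_wf) <;> first
  | (have := List.sizeOf_lt_of_mem u.2; omega)
  | omega

/-- The multiplicity `m(T) = ∏_{u ∈ supp T} T(u)! · m(u)^{T(u)}`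
of a simple poly-term `T`. -/
def multPoly (T : List RTerm) : ℕ :=
  (T.map mult).prod *
    ∏ u ∈ (↑T : Multiset RTerm).toFinset, ((↑T : Multiset RTerm).count u).factorial

end
noncomputable section
open scoped Classical

/-- Terms of the algebraic λ-calculus over a semiring `S`
(`M ::= x | λx.M | (M)N | αM | M+N | 0`), enriched with the constant `c₀`. -/
inductive ATerm (S : Type*) : Type _
  | var  : ℕ → ATerm S
  | lam  : ℕ → ATerm S → ATerm S
  | app  : ATerm S → ATerm S → ATerm S
  | smul : S → ATerm S → ATerm S
  | add  : ATerm S → ATerm S → ATerm S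
  | zero : ATerm S
  | c0   : ATerm S

variable {S : Type*}

/-- Free variables of an algebraic term. -/
def ATerm.fv : ATerm S → Set ℕ
  | .var x => {x}
  | .lam x M => M.fv \ {x}
  | .app M N => M.fv ∪ N.fv
  | .smul _ M => M.fv
  | .add M N => M.fv ∪ N.fv
  | .zero => ∅
  | .c0 => ∅

/-- The weight `w(t,M)` of a simple resource term `t` in an algebraic term `M`:
`w(x,x) = 1`, `w(λx.t, λx.M) = w(t,M)`,
`w(⟨t⟩T, (M)N) = w(t,M) · ∏_{u ∈ supp T} w(u,N)^{T(u)}`,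
`w(t, αM) = α·w(t,M)`, `w(t, M+N) = w(t,M) + w(t,N)`, `w(c₀,c₀) = 1`,
and `w(t,M) = 0` in all other cases. -/
def weight [Semiring S] : RTerm → ATerm S → S
  | t, .smul α M => α * weight t M
  | t, .add M N => weight t M + weight t N
  | .var x, .var y => if x = y then 1 else 0
  | .lam x t, .lam y M => if x = y then weight t M else 0
  | .app t T, .app M N => weight t M * (T.attach.map fun u => weight u.1 N).prod
  | .c0, .c0 => 1
  | _, _ => 0
termination_by t M => sizeOf M
decreasing_by all_goals (try simp_wf) <;> omega

/-- The coefficient `M*_t = w(t,M) / m(t)` of the simple term `t` in the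
Taylor expansion `M* = Σ_t (w(t,M)/m(t))·t` of the algebraic term `M`
(meaningful when the positive integers are invertible in `S`). -/
def taylorCoeff [Semiring S] (t : RTerm) (M : ATerm S) : S :=
  Ring.inverse ((mult t : S)) * weight t M

/-- The equivalence `≡_alg` of the algebraic λ-calculus: the congruence
generated by the left `S`-module axioms and the linearity axioms. -/
inductive AlgEq [Semiring S] : ATerm S → ATerm S → Prop
  | refl (M) : AlgEq M M
  | symm {M N} : AlgEq M N → AlgEq N M
  | trans {M N P} : AlgEq M N → AlgEq N P → AlgEq M P
  -- congruence rules
  | lamCong (x) {M N} : AlgEq M N → AlgEq (.lam x M) (.lam x N)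
  | appCong {M M' N N'} : AlgEq M M' → AlgEq N N' → AlgEq (.app M N) (.app M' N')
  | smulCong (α) {M N} : AlgEq M N → AlgEq (.smul α M) (.smul α N)
  | addCong {M M' N N'} : AlgEq M M' → AlgEq N N' → AlgEq (.add M N) (.add M' N')
  -- left S-module axioms
  | addZero (M) : AlgEq (.add M .zero) M
  | addAssoc (M N P) : AlgEq (.add (.add M N) P) (.add M (.add N P))
  | addComm (M N) : AlgEq (.add M N) (.add N M)
  | smulAdd (α M N) : AlgEq (.smul α (.add M N)) (.add (.smul α M) (.smul α N))
  | addSmul (α β M) : AlgEq (.add (.smul α M) (.smul β M)) (.smul (α + β) M)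
  | smulSmul (α β M) : AlgEq (.smul α (.smul β M)) (.smul (α * β) M)
  | oneSmul (M) : AlgEq (.smul 1 M) M
  | zeroSmul (M) : AlgEq (.smul (0 : S) M) .zero
  | smulZero (α) : AlgEq (.smul α .zero) .zero
  -- linearity axioms
  | lamAdd (x M N) : AlgEq (.lam x (.add M N)) (.add (.lam x M) (.lam x N))
  | lamSmul (x α M) : AlgEq (.lam x (.smul α M)) (.smul α (.lam x M))
  | lamZero (x) : AlgEq (.lam x (.zero : ATerm S)) .zero
  | zeroApp (M) : AlgEq (.app .zero M) .zero
  | smulApp (α M N) : AlgEq (.app (.smul α M) N) (.smul α (.app M N))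
  | addApp (M N P) : AlgEq (.app (.add M N) P) (.add (.app M P) (.app N P))

/-- Pure λ-terms: algebraic terms built only from variables, abstraction and
application. -/
inductive ATerm.Pure : ATerm S → Prop
  | var (x) : Pure (.var x)
  | lam (x) {M} : Pure M → Pure (.lam x M)
  | app {M N} : Pure M → Pure N → Pure (.app M N)

end
noncomputable section
open scoped Classical

/-- Resource closures: a closure is a pair of a simple poly-term and a
resource environment; a resource environment is (the graph of) a finite map
from variables to resource closures, represented as an association list whose
entries for a common variable are read as concatenated. -/
inductive RClo : Type
  | mk : List RTerm → List (ℕ × RClo) → RClo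

/-- Resource environments. -/
abbrev REnv : Type := List (ℕ × RClo)

/-- The empty resource closure `1 = (1, e₀)`. -/
def RClo.empty : RClo := .mk [] []

/-- Concatenation of resource closures. -/
def RClo.concat : RClo → RClo → RClo
  | .mk T e, .mk T' e' => .mk (T ++ T') (e ++ e')

mutual
/-- Size of a resource closure. -/
def RClo.csize : RClo → ℕ
  | .mk T e => (T.map RTerm.size).sum + REnv.esize e
/-- Size of a resource environment. -/
def REnv.esize : List (ℕ × RClo) → ℕ
  | [] => 0
  | p :: e => RClo.csize p.2 + REnv.esize e
end

/-- `e(x)`: the closure associated with `x` by the environment `e`. -/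
def REnv.lookup (x : ℕ) (e : REnv) : RClo :=
  ((e.filter fun p => p.1 == x).map Prod.snd).foldr RClo.concat RClo.empty

mutual
/-- A resource closure is (hereditarily) the empty closure `1`. -/
def RClo.IsOne : RClo → Prop
  | .mk T e => T = [] ∧ REnv.Triv e
/-- A resource environment is trivial (it maps every variable to `1`). -/
def REnv.Triv : List (ℕ × RClo) → Prop
  | [] => True
  | p :: e => RClo.IsOne p.2 ∧ REnv.Triv e
end

/-- `e(y) = 1` for every `y ≠ x`. -/
def REnv.TrivExcept (x : ℕ) (e : REnv) : Prop :=
  ∀ p ∈ e, p.1 ≠ x → RClo.IsOne p.2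

/-- All order-preserving splittings of a list into two sublists. -/
def splits {α : Type*} : List α → List (List α × List α)
  | [] => [([], [])]
  | a :: l =>
      ((splits l).map fun p => (a :: p.1, p.2)) ++ ((splits l).map fun p => (p.1, a :: p.2))

/-- The decompositions `e = e'e''` of a resource environment: one
representative of each splitting of `e`, up to permutation. -/
def decomps (e : REnv) : List (REnv × REnv) :=
  (splits e).pwFilter fun p q => ¬ (p.1.Perm q.1 ∧ p.2.Perm q.2)

lemma REnv.esize_append (e e' : REnv) :
    REnv.esize (e ++ e') = REnv.esize e + REnv.esize e' := by
  induction e with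
  | nil => simp [REnv.esize]
  | cons p e ih => simp [REnv.esize, ih]; omega

lemma RClo.csize_concat (c d : RClo) :
    (c.concat d).csize = c.csize + d.csize := by
  cases c; cases d
  simp [RClo.concat, RClo.csize, REnv.esize_append]
  omega

lemma REnv.csize_lookup_le (x : ℕ) (e : REnv) :
    (REnv.lookup x e).csize ≤ REnv.esize e := by
  induction e with
  | nil => simp [REnv.lookup, RClo.empty, RClo.csize, REnv.esize]
  | cons p e ih =>
      rcases p with ⟨y, c⟩
      by_cases h : y = x
      · have hl : REnv.lookup x ((y, c) :: e) = c.concat (REnv.lookup x e) := by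
          simp [REnv.lookup, List.filter_cons, h]
        rw [hl, RClo.csize_concat]
        simp only [REnv.esize]
        exact Nat.add_le_add_left ih _
      · have hl : REnv.lookup x ((y, c) :: e) = REnv.lookup x e := by
          simp [REnv.lookup, List.filter_cons, h]
        rw [hl]
        simp only [REnv.esize]
        exact le_trans ih (Nat.le_add_left _ _)

lemma esize_of_mem_splits {e : REnv} {p : REnv × REnv} (h : p ∈ splits e) :
    REnv.esize p.1 + REnv.esize p.2 = REnv.esize e := by
  induction e generalizing p with
  | nil =>
      simp [splits] at h
      simp [h, REnv.esize]
  | cons a l ih =>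
      simp only [splits, List.mem_append, List.mem_map] at h
      rcases h with ⟨q, hq, rfl⟩ | ⟨q, hq, rfl⟩ <;>
        simp [REnv.esize, ← ih hq] <;> omega

lemma esize_of_mem_decomps {e : REnv} {p : REnv × REnv} (h : p ∈ decomps e) :
    REnv.esize p.1 + REnv.esize p.2 = REnv.esize e :=
  esize_of_mem_splits ((List.pwFilter_sublist _).subset h)

lemma attach_map_size_sum (T : List RTerm) :
    (T.attach.map fun u => u.1.size).sum = (T.map RTerm.size).sum := by
  simp [List.attach_map_val]

/-- Algebraic closures and environments: an algebraic closure is a pair of an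
algebraic term and an algebraic environment; an algebraic environment is a
finite partial map from variables to algebraic closures, represented as an
association list (the first entry for a variable is its binding). -/
inductive AClo (S : Type*) : Type _
  | mk : ATerm S → List (ℕ × AClo S) → AClo S

/-- Algebraic environments. -/
abbrev AEnv (S : Type*) : Type _ := List (ℕ × AClo S)

/-- `E(x)`: the closure associated with `x` by the environment `E`, if any. -/
def AEnv.lookup {S : Type*} (x : ℕ) (E : AEnv S) : Option (AClo S) :=
  (E.find? fun p => p.1 == x).map Prod.snd

variable {S : Type*} [CommSemiring S]

/-- The quantitative Krivine machine `K`: a matrix associating a scalar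
`K(M,E,Π)_{(t,e,π)} ∈ S` with an algebraic state `(M,E,Π)` and a resource
state `(t,e,π)`, defined by lexicographic induction on
(size of the resource state, size of the algebraic term). -/
def KM : ATerm S → AEnv S → List (AClo S) → RTerm → REnv → List RClo → S
  | .smul α M, E, Pi, t, e, π => α * KM M E Pi t e π
  | .add M N, E, Pi, t, e, π => KM M E Pi t e π + KM N E Pi t e π
  | .c0, _, [], .c0, e, [] => if REnv.Triv e then 1 else 0
  | .var x, E, Pi, .var y, e, π =>
      if x = y ∧ REnv.TrivExcept x e then
        match AEnv.lookup x E, hr : REnv.lookup x e with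
        | some (.mk M' E'), .mk [u] e' =>
            have hsz : u.size + REnv.esize e' ≤ REnv.esize e := by
              have h := REnv.csize_lookup_le x e
              rw [hr] at h
              simpa [RClo.csize] using h
            KM M' E' Pi u e' π
        | _, _ => 0
      else 0
  | .lam x M, E, Γ :: Pi, .lam y u, e, c :: π =>
      if x = y ∧ RClo.IsOne (REnv.lookup x e) ∧ x ∉ E.map Prod.fst then
        KM M ((x, Γ) :: E) Pi u ((x, c) :: e) π
      else 0
  | .app M N, E, Pi, .app t T, e, π =>
      ((decomps e).attach.map fun (p : {q // q ∈ decomps e}) =>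
          have hsz : REnv.esize p.1.1 + REnv.esize p.1.2 = REnv.esize e :=
            esize_of_mem_decomps p.2
          KM M E (.mk N E :: Pi) t p.1.1 (.mk T p.1.2 :: π)).sum
  | _, _, _, _, _, _ => 0
termination_by M _ _ t e π =>
  (t.size + REnv.esize e + (π.map RClo.csize).sum, sizeOf M)
decreasing_by
  all_goals simp_wf
  all_goals
    first
    | (apply Prod.Lex.right; omega)
    | (apply Prod.Lex.left
       simp [RTerm.size, REnv.esize, RClo.csize, attach_map_size_sum]
       omega)

/-- `K̂(M)_t = K(M,∅,∅)_{(t,e₀,∅)}`, for a closed algebraic term `M` and a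
simple resource term `t`. -/
def Khat (M : ATerm S) (t : RTerm) : S := KM M [] [] t [] []

end

/-!
Every recursive call of `K` either keeps the resource state `(t, e, π)` and descends into the
algebraic term, or strictly decreases the size of the resource state. By strong induction on that
size we prove the stronger claim `K(M, E, Π) = K(N, E', Π')` whenever `M ≡_alg N` and `E`, `Π`
are hereditarily equivalent to `E'`, `Π'`; the environments must be generalized because a variable
hands control to the closure it is bound to. At a fixed size the module and linearity axioms are
identities of `K`, while the congruence rules for abstraction and application, and the lookup of
a variable, reduce to strictly smaller resource states.
-/

section
open scoped Classical
variable {S : Type*} [CommSemiring S]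

mutual
def AClo.Equiv : AClo S → AClo S → Prop
  | .mk M E, .mk M' E' => AlgEq M M' ∧ AEnv.Equiv E E'
def AEnv.Equiv : AEnv S → AEnv S → Prop
  | [], [] => True
  | (x, c) :: E, (x', c') :: E' => x = x' ∧ AClo.Equiv c c' ∧ AEnv.Equiv E E'
  | [], _ :: _ => False
  | _ :: _, [] => False
end

mutual
theorem AClo.Equiv.refl : ∀ c : AClo S, AClo.Equiv c c
  | .mk M E => by rw [AClo.Equiv]; exact ⟨AlgEq.refl M, AEnv.Equiv.refl E⟩
theorem AEnv.Equiv.refl : ∀ E : AEnv S, AEnv.Equiv E E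
  | [] => by rw [AEnv.Equiv]; trivial
  | (x, c) :: E => by rw [AEnv.Equiv]; exact ⟨rfl, AClo.Equiv.refl c, AEnv.Equiv.refl E⟩
end

mutual
theorem AClo.Equiv.symm : ∀ {c d : AClo S}, AClo.Equiv c d → AClo.Equiv d c
  | .mk M E, .mk M' E', h => by
    rw [AClo.Equiv] at h ⊢; exact ⟨h.1.symm, AEnv.Equiv.symm h.2⟩
theorem AEnv.Equiv.symm : ∀ {E E' : AEnv S}, AEnv.Equiv E E' → AEnv.Equiv E' E
  | [], [], _ => by rw [AEnv.Equiv]; trivial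
  | (x, c) :: E, (x', c') :: E', h => by
    rw [AEnv.Equiv] at h ⊢; exact ⟨h.1.symm, AClo.Equiv.symm h.2.1, AEnv.Equiv.symm h.2.2⟩
  | [], _ :: _, h => by rw [AEnv.Equiv] at h; exact h.elim
  | _ :: _, [], h => by rw [AEnv.Equiv] at h; exact h.elim
end

theorem AEnv.Equiv.map_fst :
    ∀ {E E' : AEnv S}, AEnv.Equiv E E' → E.map Prod.fst = E'.map Prod.fst
  | [], [], _ => rfl
  | (x, c) :: E, (x', c') :: E', h => by
    rw [AEnv.Equiv] at h; simp [h.1, AEnv.Equiv.map_fst h.2.2]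
  | [], _ :: _, h => by rw [AEnv.Equiv] at h; exact h.elim
  | _ :: _, [], h => by rw [AEnv.Equiv] at h; exact h.elim

theorem AEnv.Equiv.lookup (x : ℕ) : ∀ {E E' : AEnv S}, AEnv.Equiv E E' →
    Option.Rel AClo.Equiv (E.lookup x) (E'.lookup x)
  | [], [], _ => .none
  | (y, c) :: E, (y', c') :: E', h => by
    rw [AEnv.Equiv] at h
    obtain ⟨rfl, hc, hE⟩ := h
    by_cases hy : y = x
    · simpa [AEnv.lookup, hy] using Option.Rel.some hc
    · simpa [AEnv.lookup, hy] using AEnv.Equiv.lookup x hE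
  | [], _ :: _, h => by rw [AEnv.Equiv] at h; exact h.elim
  | _ :: _, [], h => by rw [AEnv.Equiv] at h; exact h.elim


theorem KM_smul (α : S) (M : ATerm S) (E : AEnv S) (Pi : List (AClo S)) (t : RTerm) (e : REnv)
    (π : List RClo) : KM (.smul α M) E Pi t e π = α * KM M E Pi t e π := by
  rw [KM]

theorem KM_add (M N : ATerm S) (E : AEnv S) (Pi : List (AClo S)) (t : RTerm) (e : REnv)
    (π : List RClo) : KM (.add M N) E Pi t e π = KM M E Pi t e π + KM N E Pi t e π := by
  rw [KM]

theorem KM_zero (E : AEnv S) (Pi : List (AClo S)) (t : RTerm) (e : REnv) (π : List RClo) :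
    KM .zero E Pi t e π = 0 := by
  rw [KM] <;> simp

-- The defining equation carries the proof `hr` used for termination; this form forgets it.
theorem KM_var (x y : ℕ) (E : AEnv S) (Pi : List (AClo S)) (e : REnv) (π : List RClo) :
    KM (.var x) E Pi (.var y) e π =
      if x = y ∧ REnv.TrivExcept x e then
        match AEnv.lookup x E, REnv.lookup x e with
        | some (.mk M' E'), .mk [u] e' => KM M' E' Pi u e' π
        | _, _ => 0
      else 0 := by
  rw [KM]
  split
  · split
    · rename_i M' E' u e' hE he
      show KM M' E' Pi u e' π = _
      rw [hE, he]
    · rename_i hne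
      rcases hA : AEnv.lookup x E with _ | ⟨M',E'⟩ <;>
        rcases hr : REnv.lookup x e with ⟨T,e'⟩
      all_goals rcases T with _|⟨u,_|⟨v,T⟩⟩
      all_goals first | rfl | exact (hne _ _ _ _ hA hr).elim
  · rfl

theorem KM_lam_add (x : ℕ) (M N : ATerm S) (E : AEnv S) (Pi : List (AClo S)) (t : RTerm)
    (e : REnv) (π : List RClo) :
    KM (.lam x (.add M N)) E Pi t e π = KM (.lam x M) E Pi t e π + KM (.lam x N) E Pi t e π := by
  rcases Pi with _ | ⟨Γ, Pi⟩ <;> rcases t <;> rcases π with _ | ⟨c, π⟩ <;>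
    simp [KM, ite_add_ite]

theorem KM_lam_smul (x : ℕ) (α : S) (M : ATerm S) (E : AEnv S) (Pi : List (AClo S)) (t : RTerm)
    (e : REnv) (π : List RClo) :
    KM (.lam x (.smul α M)) E Pi t e π = α * KM (.lam x M) E Pi t e π := by
  rcases Pi with _ | ⟨Γ, Pi⟩ <;> rcases t <;> rcases π with _ | ⟨c, π⟩ <;> simp [KM]

theorem KM_lam_zero (x : ℕ) (E : AEnv S) (Pi : List (AClo S)) (t : RTerm) (e : REnv)
    (π : List RClo) : KM (.lam x .zero) E Pi t e π = 0 := by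
  rcases Pi with _ | ⟨Γ, Pi⟩ <;> rcases t <;> rcases π with _ | ⟨c, π⟩ <;> simp [KM]

theorem KM_app_zero (N : ATerm S) (E : AEnv S) (Pi : List (AClo S)) (t : RTerm) (e : REnv)
    (π : List RClo) : KM (.app .zero N) E Pi t e π = 0 := by
  rcases t <;> simp [KM]

theorem KM_app_smul (α : S) (M N : ATerm S) (E : AEnv S) (Pi : List (AClo S)) (t : RTerm)
    (e : REnv) (π : List RClo) :
    KM (.app (.smul α M) N) E Pi t e π = α * KM (.app M N) E Pi t e π := by
  rcases t <;> simp [KM, List.sum_map_mul_left]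

theorem KM_app_add (M M' N : ATerm S) (E : AEnv S) (Pi : List (AClo S)) (t : RTerm)
    (e : REnv) (π : List RClo) :
    KM (.app (.add M M') N) E Pi t e π =
      KM (.app M N) E Pi t e π + KM (.app M' N) E Pi t e π := by
  rcases t <;> simp [KM, List.sum_map_add]

def stateSize (t : RTerm) (e : REnv) (π : List RClo) : ℕ :=
  t.size + REnv.esize e + (π.map RClo.csize).sum

theorem stateSize_lam_lt (x y : ℕ) (u : RTerm) (e : REnv) (c : RClo) (π : List RClo) :
    stateSize u ((x, c) :: e) π < stateSize (.lam y u) e (c :: π) := by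
  simp only [stateSize, RTerm.size, REnv.esize, List.map_cons, List.sum_cons]
  omega

theorem stateSize_app_lt {t : RTerm} {T : List RTerm} {e : REnv} {π : List RClo}
    {p : REnv × REnv} (hp : p ∈ decomps e) :
    stateSize t p.1 (.mk T p.2 :: π) < stateSize (.app t T) e π := by
  have := esize_of_mem_decomps hp
  simp only [stateSize, RTerm.size, RClo.csize, attach_map_size_sum, List.map_cons, List.sum_cons]
  omega

theorem stateSize_var_lt {x y : ℕ} {u : RTerm} {e e' : REnv} (π : List RClo)
    (h : REnv.lookup x e = .mk [u] e') : stateSize u e' π < stateSize (.var y) e π := by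
  have := REnv.csize_lookup_le x e
  simp only [h, RClo.csize, List.map_cons, List.map_nil, List.sum_cons, List.sum_nil] at this
  simp only [stateSize, RTerm.size]
  omega

variable (S) in
def KMCongrBelow (n : ℕ) : Prop :=
  ∀ ⦃t e π⦄, stateSize t e π < n → ∀ ⦃M N : ATerm S⦄, AlgEq M N →
    ∀ ⦃E E' : AEnv S⦄, AEnv.Equiv E E' → ∀ ⦃Pi Pi' : List (AClo S)⦄,
      List.Forall₂ AClo.Equiv Pi Pi' → KM M E Pi t e π = KM N E' Pi' t e π

section
variable {t : RTerm} {e : REnv} {π : List RClo} {E E' : AEnv S} {Pi Pi' : List (AClo S)}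

theorem KM_c0_congr (hPi : List.Forall₂ AClo.Equiv Pi Pi') :
    KM .c0 E Pi t e π = KM .c0 E' Pi' t e π := by
  rcases hPi with _ | ⟨_, _⟩ <;> rcases t <;> rcases π <;> simp [KM]

theorem KM_var_congr (ih : KMCongrBelow S (stateSize t e π)) (x : ℕ) (hE : AEnv.Equiv E E')
    (hPi : List.Forall₂ AClo.Equiv Pi Pi') :
    KM (.var x) E Pi t e π = KM (.var x) E' Pi' t e π := by
  rcases t with y | _ | _ | _
  · rw [KM_var, KM_var]
    refine ite_congr rfl (fun _ => ?_) (fun _ => rfl)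
    have hl := hE.lookup x
    generalize AEnv.lookup x E = o, AEnv.lookup x E' = o' at hl ⊢
    cases hl with
    | none => rfl
    | @some c c' hc => ?_
    rcases c with ⟨M, E₁⟩
    rcases c' with ⟨M', E₁'⟩
    rw [AClo.Equiv] at hc
    rcases hr : REnv.lookup x e with ⟨_ | ⟨u, _ | _⟩, e'⟩
    · rfl
    · exact ih (stateSize_var_lt π hr) hc.1 hc.2 hPi
    · rfl
  all_goals simp [KM]

theorem KM_lam_congr (ih : KMCongrBelow S (stateSize t e π)) (x : ℕ) {M N : ATerm S}
    (h : AlgEq M N) (hE : AEnv.Equiv E E') (hPi : List.Forall₂ AClo.Equiv Pi Pi') :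
    KM (.lam x M) E Pi t e π = KM (.lam x N) E' Pi' t e π := by
  rcases t with _ | ⟨y, u⟩ | _ | _
  case lam =>
    rcases hPi with _ | ⟨hΓ, hPi⟩
    · simp [KM]
    rcases π with _ | ⟨c, π⟩
    · simp [KM]
    rw [KM, KM, hE.map_fst]
    refine ite_congr rfl (fun _ => ?_) (fun _ => rfl)
    refine ih (stateSize_lam_lt x y u e c π) h ?_ hPi
    rw [AEnv.Equiv]
    exact ⟨rfl, hΓ, hE⟩
  all_goals simp [KM]

theorem KM_app_congr (ih : KMCongrBelow S (stateSize t e π)) {M M' N N' : ATerm S}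
    (hM : AlgEq M M') (hN : AlgEq N N') (hE : AEnv.Equiv E E')
    (hPi : List.Forall₂ AClo.Equiv Pi Pi') :
    KM (.app M N) E Pi t e π = KM (.app M' N') E' Pi' t e π := by
  rcases t with _ | _ | ⟨t, T⟩ | _
  case app =>
    rw [KM, KM]
    refine congrArg List.sum (List.map_congr_left fun ⟨p, hp⟩ _ => ?_)
    refine ih (stateSize_app_lt hp) hM hE (.cons ?_ hPi)
    rw [AClo.Equiv]
    exact ⟨hN, hE⟩
  all_goals simp [KM]

theorem KM_congr_env (ih : KMCongrBelow S (stateSize t e π)) (P : ATerm S)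
    (hE : AEnv.Equiv E E') (hPi : List.Forall₂ AClo.Equiv Pi Pi') :
    KM P E Pi t e π = KM P E' Pi' t e π := by
  induction P with
  | var x => exact KM_var_congr ih x hE hPi
  | lam x P => exact KM_lam_congr ih x (.refl P) hE hPi
  | app P Q => exact KM_app_congr ih (.refl P) (.refl Q) hE hPi
  | smul α P ihP => rw [KM_smul, KM_smul, ihP]
  | add P Q ihP ihQ => rw [KM_add, KM_add, ihP, ihQ]
  | zero => rw [KM_zero, KM_zero]
  | c0 => exact KM_c0_congr hPi

theorem KM_congr_of_congrBelow (ih : KMCongrBelow S (stateSize t e π)) {M N : ATerm S}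
    (h : AlgEq M N) (hE : AEnv.Equiv E E') (hPi : List.Forall₂ AClo.Equiv Pi Pi') :
    KM M E Pi t e π = KM N E' Pi' t e π := by
  induction h generalizing E E' Pi Pi' with
  | refl P => exact KM_congr_env ih P hE hPi
  | symm _ ih' => exact (ih' hE.symm (hPi.flip.imp fun _ _ => AClo.Equiv.symm)).symm
  | trans _ _ ih₁ ih₂ =>
    exact (ih₁ (.refl E) (List.forall₂_same.2 fun c _ => .refl c)).trans (ih₂ hE hPi)
  | lamCong x h => exact KM_lam_congr ih x h hE hPi
  | appCong hM hN => exact KM_app_congr ih hM hN hE hPi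
  | smulCong α _ ih' => rw [KM_smul, KM_smul, ih' hE hPi]
  | addCong _ _ ih₁ ih₂ => rw [KM_add, KM_add, ih₁ hE hPi, ih₂ hE hPi]
  | _ =>
    -- the module and linearity axioms, which hold as identities of `KM`
    refine Eq.trans ?_ (KM_congr_env ih _ hE hPi)
    simp only [KM_add, KM_smul, KM_zero, KM_lam_add, KM_lam_smul, KM_lam_zero, KM_app_zero,
      KM_app_smul, KM_app_add] <;> ring

end

theorem KMCongrBelow.all (n : ℕ) : KMCongrBelow S n := by
  induction n using Nat.strong_induction_on with
  | _ n ih =>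
    intro t e π hlt M N h E E' hE Pi Pi' hPi
    exact KM_congr_of_congrBelow (ih _ hlt) h hE hPi

end

/-- **The quantitative Krivine machine respects the algebraic equivalence**:
over a commutative semiring `S` in which every positive integer is invertible,
if `M` and `N` are closed algebraic terms with `M ≡_alg N`, then
`K̂(M)_t = K̂(N)_t` for every simple resource term `t`. -/
theorem qKAM_algEq {S : Type*} [CommSemiring S]
    (hinv : ∀ n : ℕ, 0 < n → IsUnit ((n : S)))
    (M N : ATerm S) (hM : M.fv = ∅) (hN : N.fv = ∅) (h : AlgEq M N) :
    ∀ t : RTerm, Khat M t = Khat N t :=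
  fun _ => KMCongrBelow.all _ (Nat.lt_succ_self _) h (.refl []) .nil
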